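/- Let D_n = (1/√n) Σ_{t=1}^n ∇_γ m(Z_t, θ0, h0(X_t)) · (ĥ(X_t) − h0(X_t)). If the orthogonality property holds, i.e. E[∇_γ m(Z, θ0, h0(X)) · (ĥ(X) − h0(X)) | ĥ] = 0 almost surely, and ‖∇_γ m(z, θ, γ)‖ ≤ σ uniformly, then the conditional second moment satisfies E[‖D_n‖² | ĥ] ≤ σ² E[‖ĥ(X) − h0(X)‖² | ĥ] almost surely, for every n; in particular, all cross terms over distinct indices t ≠ t' vanish by orthogonality and independence. -/

import Mathlib

/-!
Since the data are independent of `𝒢`, conditioning on `𝒢` freezes the first-stage estimate: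
for bounded `f` jointly measurable in the data and in `𝒢`,
`E[f(Z, ·) | 𝒢](ω) = ∫ f(Z(ω'), ω) dP(ω')` almost surely, because the joint law of `(Z, id)`
on `σ(Z) ⊗ 𝒢` is a product measure.
So for almost every `ω` the claim becomes an unconditional statement about the i.i.d. vectors
`Y_t = ∇γ m(Z_t, θ0, h0(X_t)) (ĥ_ω(X_t) - h0(X_t))`, which are centred by orthogonality.
For pairwise independent centred vectors `E⟪Y_t, Y_s⟫ = ⟪E Y_t, E Y_s⟫ = 0` when `t ≠ s`,
so `E‖n^{-1/2} ∑ Y_t‖²` is the average of the `E‖Y_t‖² ≤ σ² E‖ĥ_ω(X) - h0(X)‖²`.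
-/

open MeasureTheory ProbabilityTheory Filter Finset
open scoped InnerProductSpace

noncomputable section

section Freezing

variable {Ω E F : Type*} {𝒢 : MeasurableSpace Ω} [m0 : MeasurableSpace Ω]
  [mE : MeasurableSpace E] {P : Measure Ω} [IsFiniteMeasure P] {W : Ω → E}

theorem map_prodMk_restrict_eq_prod_trim (h𝒢 : 𝒢 ≤ m0) (hW : Measurable W)
    (hindep : Indep (mE.comap W) 𝒢 P) {s : Set Ω} (hs : MeasurableSet[𝒢] s) :
    @Measure.map Ω (E × Ω) m0 (mE.prod 𝒢) (fun ω => (W ω, ω)) (P.restrict s) =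
      @Measure.prod E Ω mE 𝒢 (P.map W) ((P.trim h𝒢).restrict s) := by
  have hT : Measurable[m0, mE.prod 𝒢] fun ω => (W ω, ω) := hW.prodMk (measurable_id'' h𝒢)
  refine (@Measure.prod_eq E Ω mE 𝒢 _ _ _ _ _ fun A B hA hB => ?_).symm
  rw [Measure.map_apply hT (hA.prod hB), Measure.map_apply hW hA,
    @Measure.restrict_apply Ω 𝒢 _ _ _ hB, trim_measurableSet_eq h𝒢 (hB.inter hs),
    Measure.restrict_apply (hT (hA.prod hB)),
    ← (Indep_iff _ _ _).mp hindep _ _ ⟨A, hA, rfl⟩ (hB.inter hs)]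
  congr 1
  ext ω
  simp [and_assoc]

theorem condExp_comp_prodMk_ae_eq_integral [NormedAddCommGroup F] [NormedSpace ℝ F]
    [CompleteSpace F] (h𝒢 : 𝒢 ≤ m0) (hW : Measurable W) (hindep : Indep (mE.comap W) 𝒢 P)
    {f : E × Ω → F} (hf : StronglyMeasurable[mE.prod 𝒢] f) {B : ℝ} (hB : ∀ p, ‖f p‖ ≤ B) :
    P[fun ω => f (W ω, ω) | 𝒢] =ᵐ[P] fun ω => ∫ ω', f (W ω', ω) ∂P := by
  have hT : Measurable[m0, mE.prod 𝒢] fun ω => (W ω, ω) := hW.prodMk (measurable_id'' h𝒢)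
  set g : Ω → F := fun ω => ∫ w, f (w, ω) ∂(P.map W)
  have hg : StronglyMeasurable[𝒢] g :=
    @StronglyMeasurable.integral_prod_left' E Ω F mE 𝒢 _ _ _ _ _ hf
  have hg_eq : g = fun ω => ∫ ω', f (W ω', ω) ∂P := funext fun ω =>
    integral_map hW.aemeasurable (hf.comp_measurable measurable_prodMk_right).aestronglyMeasurable
  have hg_int : Integrable g P := .of_bound (hg.mono h𝒢).aestronglyMeasurable _
    (ae_of_all _ fun ω => norm_integral_le_of_norm_le_const (ae_of_all _ fun w => hB (w, ω)))
  have hfT_int : Integrable (fun ω => f (W ω, ω)) P :=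
    .of_bound (hf.comp_measurable hT).aestronglyMeasurable B (ae_of_all _ fun ω => hB _)
  have hsetIntegral (s : Set Ω) (hs : MeasurableSet[𝒢] s) :
      ∫ ω in s, g ω ∂P = ∫ ω in s, f (W ω, ω) ∂P := by
    calc ∫ ω in s, g ω ∂P = ∫ ω in s, g ω ∂(P.trim h𝒢) := setIntegral_trim h𝒢 hg hs
      _ = ∫ p, f p ∂(@Measure.prod E Ω mE 𝒢 (P.map W) ((P.trim h𝒢).restrict s)) :=
        (@integral_prod_symm E Ω F mE 𝒢 _ _ _ _ _ _ f
          (.of_bound hf.aestronglyMeasurable B (ae_of_all _ hB))).symm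
      _ = ∫ p, f p ∂(@Measure.map Ω (E × Ω) m0 (mE.prod 𝒢) (fun ω => (W ω, ω))
            (P.restrict s)) := by
        rw [map_prodMk_restrict_eq_prod_trim h𝒢 hW hindep hs]
      _ = ∫ ω in s, f (W ω, ω) ∂P := by
        let _ : MeasurableSpace (E × Ω) := mE.prod 𝒢
        exact integral_map hT.aemeasurable hf.aestronglyMeasurable
  rw [← hg_eq]
  exact (ae_eq_condExp_of_forall_setIntegral_eq h𝒢 hfT_int (fun s _ _ => hg_int.integrableOn)
    (fun s hs _ => hsetIntegral s hs) hg.aestronglyMeasurable).symm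

end Freezing

theorem norm_norm_sq_le {E : Type*} [SeminormedAddCommGroup E] {v : E} {c : ℝ} (h : ‖v‖ ≤ c) :
    ‖‖v‖ ^ 2‖ ≤ c ^ 2 := by
  rw [norm_pow, norm_norm]
  exact pow_le_pow_left₀ (norm_nonneg _) h 2

section SecondMoment

variable {Ω E ι : Type*} [MeasurableSpace Ω] {μ : Measure Ω} [IsFiniteMeasure μ]
  [NormedAddCommGroup E] [InnerProductSpace ℝ E] [CompleteSpace E] [MeasurableSpace E]
  [BorelSpace E] {Y : ι → Ω → E}

theorem integral_norm_sum_sq_eq_sum_integral_norm_sq (hY : ∀ i, MemLp (Y i) 2 μ)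
    (hmean : ∀ i, μ[Y i] = 0) (hindep : Pairwise fun i j => IndepFun (Y i) (Y j) μ)
    (s : Finset ι) :
    ∫ ω, ‖∑ i ∈ s, Y i ω‖ ^ 2 ∂μ = ∑ i ∈ s, ∫ ω, ‖Y i ω‖ ^ 2 ∂μ := by
  have hint : ∀ i j, Integrable (fun ω => ⟪Y i ω, Y j ω⟫_ℝ) μ := by
    intro i j
    rcases eq_or_ne i j with rfl | hij
    · simp_rw [real_inner_self_eq_norm_sq]
      exact (hY i).integrable_norm_pow two_ne_zero
    · exact (hindep hij).integrable_bilin ((hY i).integrable one_le_two)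
        ((hY j).integrable one_le_two) (innerSL ℝ)
  have hcross : ∀ i j, i ≠ j → ∫ ω, ⟪Y i ω, Y j ω⟫_ℝ ∂μ = 0 := fun i j hij => by
    have hbilin := (hindep hij).integral_bilin ((hY i).integrable one_le_two)
      ((hY j).integrable one_le_two) (innerSL ℝ)
    rw [hmean i] at hbilin
    exact hbilin.trans (by simp)
  calc ∫ ω, ‖∑ i ∈ s, Y i ω‖ ^ 2 ∂μ = ∫ ω, ∑ i ∈ s, ∑ j ∈ s, ⟪Y i ω, Y j ω⟫_ℝ ∂μ := by
        simp_rw [← real_inner_self_eq_norm_sq, sum_inner, inner_sum]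
    _ = ∑ i ∈ s, ∑ j ∈ s, ∫ ω, ⟪Y i ω, Y j ω⟫_ℝ ∂μ := by
        rw [integral_finsetSum _ fun i _ => integrable_finsetSum _ fun j _ => hint i j]
        exact sum_congr rfl fun i _ => integral_finsetSum _ fun j _ => hint i j
    _ = ∑ i ∈ s, ∫ ω, ⟪Y i ω, Y i ω⟫_ℝ ∂μ :=
        sum_congr rfl fun i hi => sum_eq_single_of_mem i hi fun j _ hji => hcross i j hji.symm
    _ = ∑ i ∈ s, ∫ ω, ‖Y i ω‖ ^ 2 ∂μ := by simp_rw [real_inner_self_eq_norm_sq]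

theorem integral_norm_inv_sqrt_smul_sum_sq_le {Y : ℕ → Ω → E} (hY : ∀ i, MemLp (Y i) 2 μ)
    (hmean : ∀ i, μ[Y i] = 0) (hindep : Pairwise fun i j => IndepFun (Y i) (Y j) μ)
    {B : ℝ} (hB0 : 0 ≤ B) (hB : ∀ i, ∫ ω, ‖Y i ω‖ ^ 2 ∂μ ≤ B) (n : ℕ) :
    ∫ ω, ‖(√n)⁻¹ • ∑ i ∈ range n, Y i ω‖ ^ 2 ∂μ ≤ B := by
  simp_rw [norm_smul, mul_pow, norm_inv, inv_pow, Real.norm_eq_abs, sq_abs,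
    Real.sq_sqrt n.cast_nonneg]
  rw [integral_const_mul, integral_norm_sum_sq_eq_sum_integral_norm_sq hY hmean hindep]
  calc (n : ℝ)⁻¹ * ∑ i ∈ range n, ∫ ω, ‖Y i ω‖ ^ 2 ∂μ ≤ (n : ℝ)⁻¹ * (n * B) := by
        gcongr
        simpa using sum_le_card_nsmul (range n) _ B fun i _ => hB i
    _ ≤ B := by
        rcases n.eq_zero_or_pos with rfl | hn
        · simpa using hB0
        · rw [inv_mul_cancel_left₀ (by positivity)]

end SecondMoment

section ConditionalSecondMoment

variable {Ω 𝒵 E : Type*} {𝒢 : MeasurableSpace Ω} {m0 : MeasurableSpace Ω}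
  [m𝒵 : MeasurableSpace 𝒵] [NormedAddCommGroup E] [InnerProductSpace ℝ E] [CompleteSpace E]
  [MeasurableSpace E] [BorelSpace E] {P : Measure Ω} [IsFiniteMeasure P] {Z : ℕ → Ω → 𝒵}

theorem condExp_norm_inv_sqrt_smul_sum_sq_le (h𝒢 : 𝒢 ≤ m0)
    (hZ : ∀ t, Measurable (Z t)) (hZindep : Pairwise fun t s => IndepFun (Z t) (Z s) P)
    (hident : ∀ t, IdentDistrib (Z t) (Z 0) P P)
    (hindep : Indep (MeasurableSpace.comap (fun ω t => Z t ω) inferInstance) 𝒢 P)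
    {g : 𝒵 × Ω → E} (hg : StronglyMeasurable[m𝒵.prod 𝒢] g) {B : ℝ} (hgB : ∀ p, ‖g p‖ ≤ B)
    (hcenter : ∀ t, P[fun ω => g (Z t ω, ω) | 𝒢] =ᵐ[P] 0) (n : ℕ) :
    P[fun ω => ‖(√n)⁻¹ • ∑ t ∈ range n, g (Z t ω, ω)‖ ^ 2 | 𝒢]
      ≤ᵐ[P] P[fun ω => ‖g (Z 0 ω, ω)‖ ^ 2 | 𝒢] := by
  have hW : Measurable fun ω t => Z t ω := measurable_pi_lambda _ hZ
  have hcoord : ∀ t, Measurable[MeasurableSpace.pi.prod 𝒢, m𝒵.prod 𝒢]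
      fun p : (ℕ → 𝒵) × Ω => (p.1 t, p.2) := fun t =>
    ((measurable_pi_apply t).comp (@measurable_fst _ _ _ 𝒢)).prodMk (@measurable_snd _ _ _ 𝒢)
  have hslice : ∀ ω, StronglyMeasurable fun z => g (z, ω) := fun ω =>
    hg.comp_measurable measurable_prodMk_right
  have hmean : ∀ t, ∀ᵐ ω ∂P, ∫ ω', g (Z t ω', ω) ∂P = 0 := fun t =>
    (condExp_comp_prodMk_ae_eq_integral h𝒢 hW hindep (hg.comp_measurable (hcoord t))
      fun p => hgB _).symm.trans (hcenter t)
  have hsum := condExp_comp_prodMk_ae_eq_integral h𝒢 hW hindep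
    (f := fun p : (ℕ → 𝒵) × Ω => ‖(√n)⁻¹ • ∑ t ∈ range n, g (p.1 t, p.2)‖ ^ 2)
    (((stronglyMeasurable_fun_sum _ fun t _ => hg.comp_measurable (hcoord t)).const_smul
      _).norm.pow 2)
    fun p => norm_norm_sq_le (c := ‖(√n)⁻¹‖ * (n * B)) <| (norm_smul_le _ _).trans <| by
      gcongr
      refine (norm_sum_le _ _).trans ?_
      simpa using sum_le_card_nsmul (range n) _ B fun t _ => hgB (p.1 t, p.2)
  have hfirst := condExp_comp_prodMk_ae_eq_integral h𝒢 hW hindep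
    (f := fun p : (ℕ → 𝒵) × Ω => ‖g (p.1 0, p.2)‖ ^ 2)
    ((hg.comp_measurable (hcoord 0)).norm.pow 2) fun p => norm_norm_sq_le (hgB _)
  filter_upwards [hsum, hfirst, ae_all_iff.2 hmean] with ω hsumω hfirstω hmeanω
  rw [hsumω, hfirstω]
  have hY : ∀ t, StronglyMeasurable fun ω' => g (Z t ω', ω) := fun t =>
    (hslice ω).comp_measurable (hZ t)
  exact integral_norm_inv_sqrt_smul_sum_sq_le (Y := fun t ω' => g (Z t ω', ω))
    (fun t => .of_bound (hY t).aestronglyMeasurable B (ae_of_all _ fun _ => hgB _)) hmeanω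
    (fun t s hts => (hZindep hts).comp (hslice ω).measurable (hslice ω).measurable)
    (integral_nonneg fun _ => sq_nonneg _)
    (fun t => ((hident t).comp ((hslice ω).measurable.norm.pow_const 2)).integral_eq.le) n

theorem condExp_norm_inv_sqrt_smul_sum_clm_apply_sq_le {F : Type*} [NormedAddCommGroup F]
    [NormedSpace ℝ F] (hZ : ∀ t, Measurable (Z t))
    (hZindep : Pairwise fun t s => IndepFun (Z t) (Z s) P)
    (hident : ∀ t, IdentDistrib (Z t) (Z 0) P P)
    (hindep : Indep (MeasurableSpace.comap (fun ω t => Z t ω) inferInstance) 𝒢 P)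
    {A : 𝒵 → F →L[ℝ] E} (hA : StronglyMeasurable A) {σ : ℝ} (hAσ : ∀ z, ‖A z‖ ≤ σ)
    {v : 𝒵 × Ω → F} (hv : StronglyMeasurable[m𝒵.prod 𝒢] v) {C : ℝ} (hvC : ∀ p, ‖v p‖ ≤ C)
    (horth : ∀ t, P[fun ω => A (Z t ω) (v (Z t ω, ω)) | 𝒢] =ᵐ[P] 0) (n : ℕ) :
    ∀ᵐ ω ∂P, P[fun ω => ‖(√n)⁻¹ • ∑ t ∈ range n, A (Z t ω) (v (Z t ω, ω))‖ ^ 2 | 𝒢] ω ≤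
      σ ^ 2 * P[fun ω => ‖v (Z 0 ω, ω)‖ ^ 2 | 𝒢] ω := by
  by_cases h𝒢 : 𝒢 ≤ m0
  swap
  · -- junk case: both conditional expectations are `0` by convention
    simp [condExp_of_not_le h𝒢]
  set g : 𝒵 × Ω → E := fun p => A p.1 (v p)
  have hg : StronglyMeasurable[m𝒵.prod 𝒢] g :=
    isBoundedBilinearMap_apply.continuous.comp_stronglyMeasurable
      ((hA.comp_measurable measurable_fst).prodMk hv)
  have hgB : ∀ p, ‖g p‖ ≤ σ * C := fun p => (A p.1).le_of_opNorm_le_of_le (hAσ p.1) (hvC p)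
  have hgv : ∀ p, ‖g p‖ ^ 2 ≤ σ ^ 2 * ‖v p‖ ^ 2 := fun p => by
    rw [← mul_pow]
    exact pow_le_pow_left₀ (norm_nonneg _) ((A p.1).le_of_opNorm_le (hAσ p.1) (v p)) 2
  have hT : Measurable[m0, m𝒵.prod 𝒢] fun ω => (Z 0 ω, ω) := (hZ 0).prodMk (measurable_id'' h𝒢)
  have hint_g : Integrable (fun ω => ‖g (Z 0 ω, ω)‖ ^ 2) P :=
    .of_bound ((hg.comp_measurable hT).norm.pow 2).aestronglyMeasurable ((σ * C) ^ 2)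
      (ae_of_all _ fun ω => norm_norm_sq_le (hgB _))
  have hint_v : Integrable (fun ω => σ ^ 2 * ‖v (Z 0 ω, ω)‖ ^ 2) P :=
    .of_bound (((hv.comp_measurable hT).norm.pow 2).const_mul _).aestronglyMeasurable
      (σ ^ 2 * C ^ 2)
      (ae_of_all _ fun ω => by
        rw [norm_mul, norm_pow, Real.norm_eq_abs, sq_abs]
        exact mul_le_mul_of_nonneg_left (norm_norm_sq_le (hvC _)) (sq_nonneg σ))
  filter_upwards
    [condExp_norm_inv_sqrt_smul_sum_sq_le h𝒢 hZ hZindep hident hindep hg hgB horth n,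
    condExp_mono (m := 𝒢) hint_g hint_v (ae_of_all _ fun ω => hgv _),
    condExp_smul (σ ^ 2) (fun ω => ‖v (Z 0 ω, ω)‖ ^ 2) 𝒢] with ω hsum hmono hsmul
  exact hsum.trans (hmono.trans_eq hsmul)

end ConditionalSecondMoment

/-- **Conditional second moment bound for `D_n`.**
With `D_n = n^{-1/2} ∑_{t<n} ∇γ m(Z_t, θ0, h0(X_t)) ⬝ (ĥ(X_t) - h0(X_t))`, if the orthogonality
property holds and `‖∇γ m‖ ≤ σ` uniformly, then
`E[‖D_n‖² | ĥ] ≤ σ² E[‖ĥ(X) - h0(X)‖² | ĥ]` almost surely, for every `n`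
(the cross terms over distinct indices vanish by orthogonality and independence). -/
theorem conditional_second_moment_of_D
    {Ω 𝒵 S : Type*} [MeasurableSpace Ω] [MeasurableSpace 𝒵] [MeasurableSpace S]
    (P : Measure Ω) [IsProbabilityMeasure P]
    {d l : ℕ}
    -- the moment function and its Jacobian in the third argument
    (m : 𝒵 → EuclideanSpace ℝ (Fin d) → EuclideanSpace ℝ (Fin l) → EuclideanSpace ℝ (Fin d))
    (Dγm : 𝒵 → EuclideanSpace ℝ (Fin d) → EuclideanSpace ℝ (Fin l) →
      (EuclideanSpace ℝ (Fin l) →L[ℝ] EuclideanSpace ℝ (Fin d)))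
    (hDγm : ∀ z θ γ, HasFDerivAt (fun γ' => m z θ γ') (Dγm z θ γ) γ)
    (hDγm_meas : StronglyMeasurable
      (fun p : 𝒵 × EuclideanSpace ℝ (Fin d) × EuclideanSpace ℝ (Fin l) => Dγm p.1 p.2.1 p.2.2))
    -- true parameter and nuisance function
    (θ0 : EuclideanSpace ℝ (Fin d)) (h0 : S → EuclideanSpace ℝ (Fin l))
    (hh0_meas : Measurable h0)
    -- the i.i.d. data and the measurable subvector
    (Z : ℕ → Ω → 𝒵) (hZmeas : ∀ t, Measurable (Z t))
    (hiid : iIndepFun Z P)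
    (hident : ∀ t, IdentDistrib (Z t) (Z 0) P P)
    (X : 𝒵 → S) (hX : Measurable X)
    -- the auxiliary σ-algebra and the first-stage estimate, measurable w.r.t. it
    (𝒢 : MeasurableSpace Ω) (h𝒢 : 𝒢 ≤ ‹MeasurableSpace Ω›)
    (hhat : Ω → S → EuclideanSpace ℝ (Fin l))
    (hhat_meas : @StronglyMeasurable _ _ _ (MeasurableSpace.prod 𝒢 inferInstance)
      (fun p : Ω × S => hhat p.1 p.2))
    -- the auxiliary sample is independent of the data sequence
    (hindep : Indep (MeasurableSpace.comap (fun ω t => Z t ω) inferInstance) 𝒢 P)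
    -- uniform bounds
    (C : ℝ) (hbound_hat : ∀ ω x, ‖hhat ω x‖ ≤ C) (hbound_h0 : ∀ x, ‖h0 x‖ ≤ C)
    (sig : ℝ) (hbound_D : ∀ z θ γ, ‖Dγm z θ γ‖ ≤ sig)
    -- the orthogonality property
    (horth : ∀ t, P[fun ω => (Dγm (Z t ω) θ0 (h0 (X (Z t ω))))
        (hhat ω (X (Z t ω)) - h0 (X (Z t ω))) | 𝒢] =ᵐ[P] 0) :
    ∀ n : ℕ,
      ∀ᵐ ω ∂P,
        (P[fun ω' => ‖(Real.sqrt n)⁻¹ •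
            ∑ t ∈ Finset.range n, (Dγm (Z t ω') θ0 (h0 (X (Z t ω'))))
              (hhat ω' (X (Z t ω')) - h0 (X (Z t ω')))‖ ^ 2 | 𝒢]) ω ≤
          sig ^ 2 *
            (P[fun ω' => ‖hhat ω' (X (Z 0 ω')) - h0 (X (Z 0 ω'))‖ ^ 2 | 𝒢]) ω := by
  intro n
  have hX₁ : Measurable[MeasurableSpace.prod inferInstance 𝒢] fun p : 𝒵 × Ω => X p.1 :=
    hX.comp measurable_fst
  exact condExp_norm_inv_sqrt_smul_sum_clm_apply_sq_le (A := fun z => Dγm z θ0 (h0 (X z)))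
    (v := fun p => hhat p.2 (X p.1) - h0 (X p.1)) hZmeas (fun t s hts => hiid.indepFun hts)
    hident hindep
    (hDγm_meas.comp_measurable
      (measurable_id.prodMk (measurable_const.prodMk (hh0_meas.comp hX))))
    (fun z => hbound_D _ _ _)
    ((hhat_meas.comp_measurable (measurable_snd.prodMk hX₁)).sub
      (hh0_meas.comp hX₁).stronglyMeasurable)
    (fun p => (norm_sub_le _ _).trans (add_le_add (hbound_hat _ _) (hbound_h0 _))) horth n
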